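/- arXiv:0801.4627 — 7 statements merged into one kernel-verified Lean document; each statement's English description precedes it below -/
import Mathlib

section
/- Let Z ~ N(0,1), θ ∈ ℝ, μ > 0, n ≥ 1, ȳ = θ + Z/√n, and θ̂_A = ȳ(1 - μ²/ȳ²)₊. Then for every x ∈ ℝ, P(√n(θ̂_A - θ) ≤ x) = 1(√n·θ + x ≥ 0)·Φ(z⁽²⁾(x)) + 1(√n·θ + x < 0)·Φ(z⁽¹⁾(x)), where z^{(1,2)}(x) = -(√n·θ - x)/2 ∓ √(((√n·θ + x)/2)² + nμ²). -/
open ProbabilityTheory MeasureTheory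

/-- Standard normal cdf. -/
noncomputable def Phi (x : ℝ) : ℝ := cdf (gaussianReal 0 1) x

/-- The adaptive LASSO estimator `θ̂ = ȳ (1 - μ²/ȳ²)₊`. -/
noncomputable def alasso (μ ybar : ℝ) : ℝ := ybar * max (1 - μ ^ 2 / ybar ^ 2) 0

lemma alasso_of_sq_le (μ y : ℝ) (h : y ^ 2 ≤ μ ^ 2) : alasso μ y = 0 := by
  rcases eq_or_ne y 0 with rfl | hy
  · simp [alasso]
  · have hy2 : 0 < y ^ 2 := by positivity
    have : (1 : ℝ) - μ ^ 2 / y ^ 2 ≤ 0 := by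
      rw [sub_nonpos, le_div_iff₀ hy2]; linarith
    simp [alasso, max_eq_right this]

lemma alasso_of_sq_ge (μ y : ℝ) (hy : y ≠ 0) (h : μ ^ 2 ≤ y ^ 2) :
    alasso μ y = y - μ ^ 2 / y := by
  have hy2 : 0 < y ^ 2 := by positivity
  have h0 : (0 : ℝ) ≤ 1 - μ ^ 2 / y ^ 2 := by
    rw [sub_nonneg, div_le_one hy2]; exact h
  rw [alasso, max_eq_left h0]
  field_simp

set_option maxHeartbeats 1000000 in
lemma alasso_le_iff (μ c y : ℝ) (hμ : 0 < μ) :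
    alasso μ y ≤ c ↔
      y ≤ (if 0 ≤ c then c / 2 + Real.sqrt ((c / 2) ^ 2 + μ ^ 2)
           else c / 2 - Real.sqrt ((c / 2) ^ 2 + μ ^ 2)) := by
  have hr0 : 0 ≤ Real.sqrt ((c / 2) ^ 2 + μ ^ 2) := Real.sqrt_nonneg _
  have hr2 : Real.sqrt ((c / 2) ^ 2 + μ ^ 2) ^ 2 = (c / 2) ^ 2 + μ ^ 2 :=
    Real.sq_sqrt (by positivity)
  set r := Real.sqrt ((c / 2) ^ 2 + μ ^ 2) with hrdef
  clear_value r
  have hrμ : μ ≤ r := by nlinarith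
  by_cases hc : 0 ≤ c
  · rw [if_pos hc]
    have hysμ : μ ≤ c / 2 + r := by linarith
    have hys0 : 0 < c / 2 + r := lt_of_lt_of_le hμ hysμ
    have hkey : (c / 2 + r) ^ 2 - c * (c / 2 + r) = μ ^ 2 := by nlinarith
    constructor
    · intro h
      by_contra hy
      push_neg at hy
      have hyμ : μ < y := lt_of_le_of_lt hysμ hy
      have hy0 : 0 < y := hμ.trans hyμ
      rw [alasso_of_sq_ge μ y hy0.ne' (by nlinarith)] at h
      have hexp : (y - μ ^ 2 / y) * y = y ^ 2 - μ ^ 2 := by field_simp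
      have hmul : (y - μ ^ 2 / y) * y ≤ c * y := mul_le_mul_of_nonneg_right h hy0.le
      have h2 : y ^ 2 - μ ^ 2 ≤ c * y := by rw [hexp] at hmul; exact hmul
      nlinarith [mul_pos (sub_pos.mpr hy) (show (0:ℝ) < y + (c / 2 + r) - c by linarith)]
    · intro hy
      by_cases hsq : y ^ 2 ≤ μ ^ 2
      · rw [alasso_of_sq_le μ y hsq]; exact hc
      · push_neg at hsq
        have hy0 : y ≠ 0 := by intro h; rw [h] at hsq; nlinarith
        rw [alasso_of_sq_ge μ y hy0 hsq.le]
        rcases lt_or_gt_of_ne hy0 with hneg | hpos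
        · have heq : y - μ ^ 2 / y = (y ^ 2 - μ ^ 2) / y := by field_simp
          rw [heq]
          have : (y ^ 2 - μ ^ 2) / y < 0 := div_neg_of_pos_of_neg (by linarith) hneg
          linarith
        · have hysc : c < c / 2 + r := by nlinarith
          have h2 : y ^ 2 - c * y - μ ^ 2 ≤ 0 := by
            nlinarith [mul_nonneg (sub_nonneg.mpr hy)
              (show (0:ℝ) ≤ y + (c / 2 + r) - c by linarith)]
          rw [sub_le_iff_le_add, ← sub_le_iff_le_add']
          rw [le_div_iff₀ hpos]
          nlinarith
  · rw [if_neg hc]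
    push_neg at hc
    have hys0 : c / 2 - r < 0 := by linarith
    have hkey : (c / 2 - r) ^ 2 - c * (c / 2 - r) = μ ^ 2 := by nlinarith
    have hysμ : c / 2 - r ≤ -μ := by nlinarith
    have hrc : -c / 2 < r := by nlinarith
    constructor
    · intro h
      by_contra hy
      push_neg at hy
      by_cases hsq : y ^ 2 ≤ μ ^ 2
      · rw [alasso_of_sq_le μ y hsq] at h; linarith
      · push_neg at hsq
        have hy0 : y ≠ 0 := by intro hh; rw [hh] at hsq; nlinarith
        rw [alasso_of_sq_ge μ y hy0 hsq.le] at h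
        rcases lt_or_gt_of_ne hy0 with hneg | hpos
        · have hexp : (y - μ ^ 2 / y) * y = y ^ 2 - μ ^ 2 := by field_simp
          have hmul : c * y ≤ (y - μ ^ 2 / y) * y := mul_le_mul_of_nonpos_right h hneg.le
          have h2 : c * y ≤ y ^ 2 - μ ^ 2 := by rw [hexp] at hmul; exact hmul
          nlinarith [mul_neg_of_pos_of_neg (sub_pos.mpr hy)
            (show y + (c / 2 - r) - c < 0 by linarith)]
        · have heq : y - μ ^ 2 / y = (y ^ 2 - μ ^ 2) / y := by field_simp
          rw [heq] at h
          have : 0 < (y ^ 2 - μ ^ 2) / y := div_pos (by linarith) hpos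
          linarith
    · intro hy
      have hyneg : y < 0 := lt_of_le_of_lt hy hys0
      have hysq : μ ^ 2 ≤ y ^ 2 := by nlinarith
      rw [alasso_of_sq_ge μ y hyneg.ne hysq]
      have h2 : c * y ≤ y ^ 2 - μ ^ 2 := by
        nlinarith [mul_nonneg (sub_nonneg.mpr hy)
          (show (0:ℝ) ≤ c - y - (c / 2 - r) by linarith)]
      rw [sub_le_iff_le_add, ← sub_le_iff_le_add']
      rw [le_div_iff_of_neg hyneg]
      nlinarith
lemma gauss_map (n : ℕ) (hn : 1 ≤ n) (θ : ℝ) :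
    gaussianReal θ ((n : NNReal))⁻¹
      = (gaussianReal 0 1).map (fun z => (Real.sqrt n)⁻¹ * z + θ) := by
  have hn1 : (1:ℝ) ≤ (n:ℝ) := by exact_mod_cast hn
  have hs : 0 < Real.sqrt n := Real.sqrt_pos.mpr (by linarith)
  have h1 : (gaussianReal (0:ℝ) 1).map (fun z => (Real.sqrt n)⁻¹ * z)
      = gaussianReal 0 ((n : NNReal))⁻¹ := by
    have h := gaussianReal_map_const_mul (μ := (0:ℝ)) (v := 1) (Real.sqrt n)⁻¹
    have hv : (⟨((Real.sqrt n)⁻¹)^2, sq_nonneg _⟩ : NNReal) * 1 = ((n : NNReal))⁻¹ := by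
      ext
      push_cast
      rw [inv_pow, Real.sq_sqrt (by linarith)]
      simp
    rw [show ((Real.sqrt n)⁻¹ * ·) = (fun z => (Real.sqrt n)⁻¹ * z) from rfl] at h
    rw [h, mul_zero]
    exact congrArg (gaussianReal 0) hv
  have h2 : (gaussianReal (0:ℝ) ((n : NNReal))⁻¹).map (· + θ)
      = gaussianReal θ ((n : NNReal))⁻¹ := by
    simpa using gaussianReal_map_add_const (μ := (0:ℝ)) (v := ((n : NNReal))⁻¹) θ
  rw [← h2, ← h1, Measure.map_map (by fun_prop) (by fun_prop)]
  rfl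

lemma gauss_Iic (n : ℕ) (hn : 1 ≤ n) (θ t : ℝ) :
    gaussianReal θ ((n : NNReal))⁻¹ (Set.Iic t)
      = ENNReal.ofReal (Phi (Real.sqrt n * (t - θ))) := by
  have hn1 : (1:ℝ) ≤ (n:ℝ) := by exact_mod_cast hn
  have hs : 0 < Real.sqrt n := Real.sqrt_pos.mpr (by linarith)
  rw [gauss_map n hn θ, Measure.map_apply (by fun_prop) measurableSet_Iic]
  have hpre : (fun z => (Real.sqrt n)⁻¹ * z + θ) ⁻¹' Set.Iic t
      = Set.Iic (Real.sqrt n * (t - θ)) := by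
    ext z
    simp only [Set.mem_preimage, Set.mem_Iic]
    rw [← le_sub_iff_add_le, inv_mul_le_iff₀ hs, mul_comm]
  rw [hpre, ← ofReal_cdf]
  rfl

/-- finite-sample cdf of `√n (θ̂_A - θ)` under `ȳ ~ N(θ, 1/n)`:
`P(√n(θ̂_A - θ) ≤ x) = 1(√n θ + x ≥ 0) Φ(z⁽²⁾(x)) + 1(√n θ + x < 0) Φ(z⁽¹⁾(x))`. -/
theorem stmt7 (θ μ : ℝ) (hμ : 0 < μ) (n : ℕ) (hn : 1 ≤ n) (x : ℝ) :
    gaussianReal θ ((n : NNReal))⁻¹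
        {y : ℝ | Real.sqrt n * (alasso μ y - θ) ≤ x}
      = ENNReal.ofReal
          (if 0 ≤ Real.sqrt n * θ + x then
            Phi (-(Real.sqrt n * θ - x) / 2
              + Real.sqrt (((Real.sqrt n * θ + x) / 2) ^ 2 + n * μ ^ 2))
          else
            Phi (-(Real.sqrt n * θ - x) / 2
              - Real.sqrt (((Real.sqrt n * θ + x) / 2) ^ 2 + n * μ ^ 2))) := by
  have hn1 : (1:ℝ) ≤ (n:ℝ) := by exact_mod_cast hn
  have hs : 0 < Real.sqrt n := Real.sqrt_pos.mpr (by linarith)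
  have hs2 : Real.sqrt n ^ 2 = (n:ℝ) := Real.sq_sqrt (by linarith)
  set s := Real.sqrt (n:ℝ) with hsdef
  have hsc : s * (θ + x / s) = s * θ + x := by
    rw [mul_add, mul_div_cancel₀ _ hs.ne']
  have hcond : (0 ≤ s * θ + x) ↔ (0 ≤ θ + x / s) := by
    rw [← hsc]; exact mul_nonneg_iff_of_pos_left hs
  -- the event is a lower ray
  have set_eq : {y : ℝ | s * (alasso μ y - θ) ≤ x}
      = Set.Iic (if 0 ≤ θ + x / s then
            (θ + x / s) / 2 + Real.sqrt (((θ + x / s) / 2) ^ 2 + μ ^ 2)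
          else (θ + x / s) / 2 - Real.sqrt (((θ + x / s) / 2) ^ 2 + μ ^ 2)) := by
    ext y
    simp only [Set.mem_setOf_eq, Set.mem_Iic]
    rw [← alasso_le_iff μ (θ + x / s) y hμ, mul_comm, ← le_div_iff₀ hs,
      sub_le_iff_le_add']
  -- argument identities
  have hsr : s * Real.sqrt (((θ + x / s) / 2) ^ 2 + μ ^ 2)
      = Real.sqrt (((s * θ + x) / 2) ^ 2 + (n:ℝ) * μ ^ 2) := by
    have harg : ((s * θ + x) / 2) ^ 2 + (n:ℝ) * μ ^ 2
        = s ^ 2 * (((θ + x / s) / 2) ^ 2 + μ ^ 2) := by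
      rw [← hsc, ← hs2]; ring
    rw [harg, Real.sqrt_mul (sq_nonneg s), Real.sqrt_sq hs.le]
  have hhalf : s * ((θ + x / s) / 2) = (s * θ + x) / 2 := by rw [← hsc]; ring
  rw [set_eq]
  by_cases hx : 0 ≤ s * θ + x
  · rw [if_pos (hcond.mp hx), if_pos hx, gauss_Iic n hn θ _]
    congr 2
    rw [mul_sub, mul_add, hsr, hhalf]; ring
  · rw [if_neg (fun h => hx (hcond.mpr h)), if_neg hx, gauss_Iic n hn θ _]
    congr 2
    rw [mul_sub, mul_sub, hsr, hhalf]; ring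
end

section
/- In the Gaussian location model setup (Z ~ N(0,1), ȳ = θ + Z/√n, θ̂_A = ȳ(1-μ²/ȳ²)₊ with μ > 0), the distribution of √n(θ̂_A - θ) has an atom at the point -√n·θ with mass Φ(√n(μ - θ)) - Φ(√n(-μ - θ)) > 0, and assigns no other atoms. -/
open ProbabilityTheory MeasureTheory Set

lemma gauss_singleton (m x : ℝ) {v : NNReal} (hv : v ≠ 0) :
    gaussianReal m v {x} = 0 :=
  gaussianReal_absolutelyContinuous m hv (measure_singleton x)

lemma Phi_nonneg (x : ℝ) : 0 ≤ Phi x := cdf_nonneg _ x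

lemma gauss01_Iic (x : ℝ) : gaussianReal 0 1 (Iic x) = ENNReal.ofReal (Phi x) :=
  (ofReal_cdf _ x).symm

lemma gauss01_Ioc {a b : ℝ} (hab : a ≤ b) :
    gaussianReal 0 1 (Ioc a b) = ENNReal.ofReal (Phi b - Phi a) := by
  rw [← Iic_sdiff_Iic,
    measure_diff (Iic_subset_Iic.mpr hab) measurableSet_Iic.nullMeasurableSet
      (measure_ne_top _ _), gauss01_Iic, gauss01_Iic,
    ← ENNReal.ofReal_sub (Phi b) (Phi_nonneg a)]

lemma gauss01_Icc {a b : ℝ} (hab : a ≤ b) :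
    gaussianReal 0 1 (Icc a b) = ENNReal.ofReal (Phi b - Phi a) := by
  rw [← gauss01_Ioc hab]
  refine le_antisymm ?_ (measure_mono Ioc_subset_Icc_self)
  calc gaussianReal 0 1 (Icc a b) = gaussianReal 0 1 ({a} ∪ Ioc a b) := by
        rw [singleton_union, Ioc_insert_left hab]
    _ ≤ gaussianReal 0 1 {a} + gaussianReal 0 1 (Ioc a b) := measure_union_le _ _
    _ = gaussianReal 0 1 (Ioc a b) := by rw [gauss_singleton _ _ one_ne_zero, zero_add]

/-- the distribution of `√n (θ̂_A - θ)` has an atom at `-√n θ`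
with mass `Φ(√n(μ-θ)) - Φ(√n(-μ-θ)) > 0` and no other atoms. -/
theorem stmt8 (θ μ : ℝ) (hμ : 0 < μ) (n : ℕ) (hn : 1 ≤ n) :
    gaussianReal θ ((n : NNReal))⁻¹
        {y : ℝ | Real.sqrt n * (alasso μ y - θ) = -(Real.sqrt n * θ)}
      = ENNReal.ofReal
          (Phi (Real.sqrt n * (μ - θ)) - Phi (Real.sqrt n * (-μ - θ))) ∧
    0 < Phi (Real.sqrt n * (μ - θ)) - Phi (Real.sqrt n * (-μ - θ)) ∧
    ∀ a : ℝ, a ≠ -(Real.sqrt n * θ) →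
      gaussianReal θ ((n : NNReal))⁻¹
        {y : ℝ | Real.sqrt n * (alasso μ y - θ) = a} = 0 := by
  have hn0 : (0 : ℝ) < n := by exact_mod_cast hn
  set s : ℝ := Real.sqrt n with hs
  have hs0 : 0 < s := Real.sqrt_pos.mpr hn0
  have hs2 : s ^ 2 = n := Real.sq_sqrt hn0.le
  have hvne : ((n : NNReal))⁻¹ ≠ 0 := by
    rw [Ne, inv_eq_zero]
    exact_mod_cast Nat.one_le_iff_ne_zero.mp hn
  -- the representation of the measure as a pushforward of the standard gaussian
  have hmap : gaussianReal θ ((n : NNReal))⁻¹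
      = (gaussianReal 0 1).map (fun x => s⁻¹ * x + θ) := by
    have hvar : (⟨(s⁻¹) ^ 2, sq_nonneg _⟩ : NNReal) = ((n : NNReal))⁻¹ := by
      ext
      simp only [NNReal.coe_mk, NNReal.coe_inv, NNReal.coe_natCast]
      rw [inv_pow, hs2]
      norm_cast
    have h1 : (gaussianReal 0 1).map (fun x => s⁻¹ * x) = gaussianReal 0 ((n : NNReal))⁻¹ := by
      rw [gaussianReal_map_const_mul, mul_zero, mul_one]; exact congrArg _ hvar
    have h2 : ((gaussianReal 0 1).map (fun x => s⁻¹ * x)).map (· + θ)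
        = gaussianReal θ ((n : NNReal))⁻¹ := by
      rw [h1, gaussianReal_map_add_const, zero_add]
    rw [← h2, Measure.map_map (measurable_add_const θ) (measurable_const_mul _)]
    rfl
  have key : ∀ S : Set ℝ, MeasurableSet S →
      gaussianReal θ ((n : NNReal))⁻¹ S = gaussianReal 0 1 ((fun x => s⁻¹ * x + θ) ⁻¹' S) := by
    intro S hS
    rw [hmap, Measure.map_apply (by fun_prop) hS]
  -- the atom set
  have hzero : ∀ y : ℝ, alasso μ y = 0 ↔ y ∈ Icc (-μ) μ := by
    intro y
    rcases eq_or_ne y 0 with rfl | hy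
    · rw [show alasso μ 0 = 0 by simp [alasso], mem_Icc]
      refine ⟨fun _ => ⟨by linarith, hμ.le⟩, fun _ => rfl⟩
    · have hy2 : 0 < y ^ 2 := by positivity
      unfold alasso
      rw [mul_eq_zero]
      constructor
      · rintro (h | h)
        · exact absurd h hy
        · have hle : 1 - μ ^ 2 / y ^ 2 ≤ 0 := by
            by_contra hlt
            push_neg at hlt
            rw [max_eq_left hlt.le] at h
            linarith
          have hsq : y ^ 2 ≤ μ ^ 2 := by
            rw [sub_nonpos, le_div_iff₀ hy2] at hle
            nlinarith
          rw [mem_Icc]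
          constructor <;> nlinarith
      · intro hmem
        rw [mem_Icc] at hmem
        right
        rw [max_eq_right]
        rw [sub_nonpos, le_div_iff₀ hy2]
        nlinarith
  have hsetA : {y : ℝ | s * (alasso μ y - θ) = -(s * θ)} = Icc (-μ) μ := by
    ext y
    simp only [mem_setOf_eq]
    rw [← hzero y]
    constructor
    · intro h
      have h' : s * alasso μ y = 0 := by linear_combination h
      rcases mul_eq_zero.mp h' with h'' | h''
      · exact absurd h'' hs0.ne'
      · exact h''
    · intro h; rw [h]; ring
  have hpre : (fun x => s⁻¹ * x + θ) ⁻¹' Icc (-μ) μ = Icc (s * (-μ - θ)) (s * (μ - θ)) := by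
    ext x
    simp only [mem_preimage, mem_Icc]
    constructor
    · rintro ⟨h1, h2⟩
      have h1' := mul_le_mul_of_nonneg_left h1 hs0.le
      have h2' := mul_le_mul_of_nonneg_left h2 hs0.le
      rw [mul_add, ← mul_assoc, mul_inv_cancel₀ hs0.ne', one_mul] at h1' h2'
      constructor <;> · rw [mul_sub]; linarith
    · rintro ⟨h1, h2⟩
      have h1' := mul_le_mul_of_nonneg_left h1 (inv_nonneg.mpr hs0.le)
      have h2' := mul_le_mul_of_nonneg_left h2 (inv_nonneg.mpr hs0.le)
      rw [← mul_assoc, inv_mul_cancel₀ hs0.ne', one_mul] at h1' h2'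
      constructor <;> linarith
  have hablt : s * (-μ - θ) < s * (μ - θ) := by
    apply mul_lt_mul_of_pos_left _ hs0
    linarith
  have part1 : gaussianReal θ ((n : NNReal))⁻¹
      {y : ℝ | s * (alasso μ y - θ) = -(s * θ)}
      = ENNReal.ofReal (Phi (s * (μ - θ)) - Phi (s * (-μ - θ))) := by
    rw [hsetA, key _ measurableSet_Icc, hpre, gauss01_Icc hablt.le]
  refine ⟨part1, ?_, ?_⟩
  · -- positivity of the mass
    by_contra hle
    push_neg at hle
    have h0 : gaussianReal 0 1 (Ioc (s * (-μ - θ)) (s * (μ - θ))) = 0 := by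
      rw [gauss01_Ioc hablt.le, ENNReal.ofReal_eq_zero]
      exact hle
    have hv0 := gaussianReal_absolutelyContinuous' 0 one_ne_zero h0
    rw [Real.volume_Ioc, ENNReal.ofReal_eq_zero] at hv0
    linarith
  · -- no other atoms
    intro a ha
    set c0 : ℝ := θ + a / s with hc0
    have hc0ne : c0 ≠ 0 := by
      intro h
      apply ha
      have h1 : a / s = -θ := by rw [hc0] at h; linarith
      have h2 : a = -θ * s := (div_eq_iff hs0.ne').mp h1
      rw [h2]; ring
    have hset : {y : ℝ | s * (alasso μ y - θ) = a} ⊆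
        {y : ℝ | y ^ 2 - c0 * y - μ ^ 2 = 0} := by
      intro y hy
      simp only [mem_setOf_eq] at hy ⊢
      have hval : alasso μ y = c0 := by
        have hd : alasso μ y - θ = a / s := by
          rw [eq_div_iff hs0.ne']
          linear_combination hy
        rw [hc0]; linarith
      have hyout : y ∉ Icc (-μ) μ := by
        intro hmem
        exact hc0ne (hval ▸ ((hzero y).mpr hmem))
      have hy0 : y ≠ 0 := by
        intro h; apply hyout; rw [h]; exact ⟨by linarith, hμ.le⟩
      have hy2 : 0 < y ^ 2 := by positivity
      have hmax : max (1 - μ ^ 2 / y ^ 2) 0 = 1 - μ ^ 2 / y ^ 2 := by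
        apply max_eq_left
        rw [sub_nonneg, div_le_one hy2]
        rw [mem_Icc] at hyout
        push_neg at hyout
        rcases le_or_gt (-μ) y with h1 | h1
        · have := hyout h1
          nlinarith
        · nlinarith
      unfold alasso at hval
      rw [hmax] at hval
      have hmul : (y * (1 - μ ^ 2 / y ^ 2)) * y = y ^ 2 - μ ^ 2 := by
        field_simp
      rw [hval] at hmul
      linarith
    -- the solution set of the quadratic is a pair
    set D : ℝ := Real.sqrt (c0 ^ 2 + 4 * μ ^ 2) with hD
    have hD2 : D ^ 2 = c0 ^ 2 + 4 * μ ^ 2 := Real.sq_sqrt (by positivity)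
    have hpair : {y : ℝ | y ^ 2 - c0 * y - μ ^ 2 = 0} ⊆ {(c0 + D) / 2, (c0 - D) / 2} := by
      intro y hy
      simp only [mem_setOf_eq] at hy
      have hfac : (y - (c0 + D) / 2) * (y - (c0 - D) / 2) = 0 := by
        linear_combination hy - hD2 / 4
      simp only [mem_insert_iff, mem_singleton_iff]
      rcases mul_eq_zero.mp hfac with h | h
      · left; linarith
      · right; linarith
    have hsub := hset.trans hpair
    refine le_antisymm ?_ (zero_le)
    calc gaussianReal θ ((n : NNReal))⁻¹ {y : ℝ | s * (alasso μ y - θ) = a}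
        ≤ gaussianReal θ ((n : NNReal))⁻¹ {(c0 + D) / 2, (c0 - D) / 2} := measure_mono hsub
      _ ≤ gaussianReal θ ((n : NNReal))⁻¹ {(c0 + D) / 2}
          + gaussianReal θ ((n : NNReal))⁻¹ {(c0 - D) / 2} := by
            rw [insert_eq]; exact measure_union_le _ _
      _ = 0 := by rw [gauss_singleton _ _ hvne, gauss_singleton _ _ hvne, add_zero]
end

section
/- Let (μₙ) be positive reals and (θₙ) real with θₙ/μₙ → ∞ and √n·θₙ → ∞. Define z⁽²⁾ₙ(x) = -(√n·θₙ - x)/2 + √(((√n·θₙ + x)/2)² + nμₙ²). Then for every x ∈ ℝ, z⁽²⁾ₙ(x) - x is asymptotically equivalent to √n·μₙ²/θₙ, i.e., (z⁽²⁾ₙ(x) - x)/(√n·μₙ²/θₙ) → 1 as n → ∞. -/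
open Filter

lemma aux11 (x μ θ nr : ℝ) (hn : 1 ≤ nr) (hθ : 0 < θ) (hμ : 0 < μ)
    (hs : |x| < Real.sqrt nr * θ) :
    ((-(Real.sqrt nr * θ - x) / 2
        + Real.sqrt (((Real.sqrt nr * θ + x) / 2) ^ 2 + nr * μ ^ 2)) - x)
      / (Real.sqrt nr * μ ^ 2 / θ)
    = 1 / ((1/2 + x/(2*(Real.sqrt nr * θ)))
        + Real.sqrt ((1/2 + x/(2*(Real.sqrt nr * θ)))^2 + (μ/θ)^2)) := by
  set s := Real.sqrt nr * θ with hsdef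
  have hnr0 : (0:ℝ) < nr := lt_of_lt_of_le one_pos hn
  have hrn : 0 < Real.sqrt nr := Real.sqrt_pos.mpr hnr0
  have hrnsq : Real.sqrt nr * Real.sqrt nr = nr := Real.mul_self_sqrt hnr0.le
  have hs0 : 0 < s := lt_of_le_of_lt (abs_nonneg x) hs
  have ha : 0 < (s + x)/2 := by
    have := neg_lt_of_abs_lt hs
    linarith
  set a := (s + x)/2 with hadef
  set T := Real.sqrt (a^2 + nr*μ^2) with hTdef
  have hT2 : T^2 = a^2 + nr*μ^2 := Real.sq_sqrt (by positivity)
  have hTpos : 0 < T := Real.sqrt_pos.mpr (by positivity)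
  have hs2 : s^2 = nr * θ^2 := by
    rw [hsdef]; rw [mul_pow, Real.sq_sqrt hnr0.le]
  have hnum : -(s - x)/2 + T - x = T - a := by rw [hadef]; ring
  have hnum2 : T - a = nr*μ^2/(T+a) := by
    rw [eq_div_iff (by positivity)]; nlinarith [hT2]
  have hin : (1/2 + x/(2*s))^2 + (μ/θ)^2 = (a^2 + nr*μ^2)/s^2 := by
    rw [hadef]
    field_simp
    linear_combination (4*μ^2) * hs2
  have hsq : Real.sqrt ((1/2 + x/(2*s))^2 + (μ/θ)^2) = T/s := by
    rw [hin, Real.sqrt_div (by positivity), Real.sqrt_sq hs0.le, hTdef]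
  have hhalf : 1/2 + x/(2*s) = a/s := by rw [hadef]; field_simp
  rw [show -(s - x) / 2 + T - x = T - a from hnum, hnum2, hsq, hhalf,
      ← add_div, one_div_div]
  rw [hsdef]
  field_simp
  linear_combination (-(a+T)) * hrnsq

/-- if `θₙ/μₙ → ∞` and `√n θₙ → ∞`, then for every `x`,
`z⁽²⁾ₙ(x) - x ∼ √n μₙ²/θₙ`, i.e. the ratio tends to `1`. -/
theorem stmt11 (μ θ : ℕ → ℝ) (hμpos : ∀ n, 0 < μ n)
    (h1 : Tendsto (fun n : ℕ => θ n / μ n) atTop atTop)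
    (h2 : Tendsto (fun n : ℕ => Real.sqrt n * θ n) atTop atTop) :
    ∀ x : ℝ,
      Tendsto
        (fun n : ℕ =>
          ((-(Real.sqrt n * θ n - x) / 2
              + Real.sqrt (((Real.sqrt n * θ n + x) / 2) ^ 2 + n * (μ n) ^ 2))
            - x) / (Real.sqrt n * (μ n) ^ 2 / θ n))
        atTop (nhds 1) := by
  intro x
  -- μ/θ → 0
  have hμθ : Tendsto (fun n : ℕ => μ n / θ n) atTop (nhds 0) := by
    have := h1.inv_tendsto_atTop
    refine this.congr fun n => ?_
    simp [Pi.inv_apply, inv_div]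
  -- x/(2s) → 0
  have h2s : Tendsto (fun n : ℕ => 2 * (Real.sqrt n * θ n)) atTop atTop :=
    h2.const_mul_atTop two_pos
  have hx2s : Tendsto (fun n : ℕ => x / (2 * (Real.sqrt n * θ n))) atTop (nhds 0) :=
    Tendsto.div_atTop tendsto_const_nhds h2s
  -- half + x/(2s) → 1/2
  have hhalf : Tendsto (fun n : ℕ => 1/2 + x/(2*(Real.sqrt n * θ n))) atTop
      (nhds (1/2)) := by
    simpa using tendsto_const_nhds.add hx2s
  -- inner of sqrt → 1/4
  have hinner : Tendsto (fun n : ℕ =>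
      (1/2 + x/(2*(Real.sqrt n * θ n)))^2 + (μ n/θ n)^2) atTop (nhds (1/4)) := by
    have := (hhalf.pow 2).add (hμθ.pow 2)
    norm_num at this ⊢
    exact this
  have hsqrt : Tendsto (fun n : ℕ =>
      Real.sqrt ((1/2 + x/(2*(Real.sqrt n * θ n)))^2 + (μ n/θ n)^2)) atTop
      (nhds (1/2)) := by
    have h14 : Real.sqrt (1/4) = 1/2 := by
      rw [show (1/4 : ℝ) = (1/2)^2 by norm_num, Real.sqrt_sq (by norm_num)]
    have := (Real.continuous_sqrt.continuousAt (x := (1/4:ℝ))).tendsto.comp hinner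
    rwa [h14] at this
  have hden : Tendsto (fun n : ℕ =>
      (1/2 + x/(2*(Real.sqrt n * θ n)))
        + Real.sqrt ((1/2 + x/(2*(Real.sqrt n * θ n)))^2 + (μ n/θ n)^2)) atTop
      (nhds 1) := by
    have := hhalf.add hsqrt
    norm_num at this ⊢
    exact this
  have hg : Tendsto (fun n : ℕ =>
      1 / ((1/2 + x/(2*(Real.sqrt n * θ n)))
        + Real.sqrt ((1/2 + x/(2*(Real.sqrt n * θ n)))^2 + (μ n/θ n)^2))) atTop
      (nhds 1) := by
    have := (tendsto_const_nhds (x := (1:ℝ))).div hden one_ne_zero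
    rw [div_one] at this
    exact this.congr fun n => rfl
  refine hg.congr' ?_
  -- eventual equality
  have e1 : ∀ᶠ n : ℕ in atTop, |x| < Real.sqrt n * θ n :=
    h2.eventually_gt_atTop |x|
  have e2 : ∀ᶠ n : ℕ in atTop, (1:ℝ) ≤ θ n / μ n := h1.eventually_ge_atTop 1
  have e3 : ∀ᶠ n : ℕ in atTop, (1:ℝ) ≤ (n:ℝ) := by
    filter_upwards [eventually_ge_atTop 1] with n hn
    exact_mod_cast hn
  filter_upwards [e1, e2, e3] with n hn1 hn2 hn3
  have hθpos : 0 < θ n := by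
    have hμ := hμpos n
    have := (le_div_iff₀ hμ).mp hn2
    linarith
  exact (aux11 x (μ n) (θ n) (n:ℝ) hn3 hθpos (hμpos n) hn1).symm
end

section
/- Let (μₙ) be positive reals and (θₙ) real with θₙ/μₙ → -∞ and √n·θₙ → -∞. Define z⁽¹⁾ₙ(x) = -(√n·θₙ - x)/2 - √(((√n·θₙ + x)/2)² + nμₙ²). Then for every x ∈ ℝ, (z⁽¹⁾ₙ(x) - x)/(√n·μₙ²/θₙ) → 1 as n → ∞. -/
open Filter

/-- if `θₙ/μₙ → -∞` and `√n θₙ → -∞`, then for every `x`,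
`z⁽¹⁾ₙ(x) - x ∼ √n μₙ²/θₙ`, i.e. the ratio tends to `1`. -/
theorem stmt12 (μ θ : ℕ → ℝ) (hμpos : ∀ n, 0 < μ n)
    (h1 : Tendsto (fun n : ℕ => θ n / μ n) atTop atBot)
    (h2 : Tendsto (fun n : ℕ => Real.sqrt n * θ n) atTop atBot) :
    ∀ x : ℝ,
      Tendsto
        (fun n : ℕ =>
          ((-(Real.sqrt n * θ n - x) / 2
              - Real.sqrt (((Real.sqrt n * θ n + x) / 2) ^ 2 + n * (μ n) ^ 2))
            - x) / (Real.sqrt n * (μ n) ^ 2 / θ n))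
        atTop (nhds 1) := by
  intro x
  set u : ℕ → ℝ := fun n => x / (Real.sqrt n * θ n) with hu_def
  set v : ℕ → ℝ := fun n => (μ n) ^ 2 / (θ n) ^ 2 with hv_def
  have hneg : Tendsto (fun n : ℕ => -(Real.sqrt n * θ n)) atTop atTop :=
    tendsto_neg_atBot_atTop.comp h2
  have hu : Tendsto u atTop (nhds 0) := by
    have := hneg.const_div_atTop (-x)
    simpa [hu_def, neg_div_neg_eq] using this
  have hv : Tendsto v atTop (nhds 0) := by
    have h := tendsto_abs_atBot_atTop.comp h1
    have h' : Tendsto (fun n : ℕ => (θ n / μ n) ^ 2) atTop atTop := by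
      simpa [← sq, sq_abs] using h.atTop_mul_atTop₀ h
    have := h'.inv_tendsto_atTop
    simpa [hv_def, Pi.inv_def, inv_pow, inv_div, div_pow] using this
  have h1u : Tendsto (fun n => 1 + u n) atTop (nhds 1) := by
    simpa using tendsto_const_nhds.add hu
  have hnum : Tendsto (fun n => 2 / (1 + u n)) atTop (nhds 2) := by
    have := (tendsto_const_nhds (α := ℕ) (x := (2:ℝ))).div h1u one_ne_zero
    rw [div_one] at this
    exact this
  have hrad : Tendsto (fun n => 1 + 4 * v n / (1 + u n) ^ 2) atTop (nhds 1) := by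
    have := (hv.const_mul 4).div (h1u.pow 2) (by norm_num)
    simpa using tendsto_const_nhds.add this
  have hden : Tendsto (fun n => Real.sqrt (1 + 4 * v n / (1 + u n) ^ 2) + 1)
      atTop (nhds 2) := by
    have := hrad.sqrt.add (tendsto_const_nhds (α := ℕ) (x := (1:ℝ)))
    simpa [one_add_one_eq_two] using this
  have hR : Tendsto
      (fun n => (2 / (1 + u n)) / (Real.sqrt (1 + 4 * v n / (1 + u n) ^ 2) + 1))
      atTop (nhds 1) := by
    have := hnum.div hden two_ne_zero
    rw [div_self two_ne_zero] at this
    exact this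
  refine hR.congr' ?_
  filter_upwards [eventually_ge_atTop 1, h2.eventually (eventually_lt_atBot (-(|x| + 1)))]
    with n hn ha
  set c := Real.sqrt (n : ℝ) with hc_def
  have hnpos : (0:ℝ) < (n : ℝ) := by exact_mod_cast hn
  have hc : 0 < c := Real.sqrt_pos.2 hnpos
  have hc2 : c ^ 2 = (n : ℝ) := Real.sq_sqrt hnpos.le
  have hμ : 0 < μ n := hμpos n
  have haneg : c * θ n < 0 := by nlinarith [abs_nonneg x]
  have hθ : θ n < 0 := by
    rcases lt_trichotomy (θ n) 0 with h | h | h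
    · exact h
    · simp [h] at haneg
    · nlinarith
  have hθ' : θ n ≠ 0 := hθ.ne
  have hax : c * θ n + x < 0 := by
    have := le_abs_self x
    linarith
  have hax' : c * θ n + x ≠ 0 := hax.ne
  have hb : (c * θ n + x) / 2 < 0 := by linarith
  have hu' : u n = x / (c * θ n) := rfl
  have hv' : v n = (μ n) ^ 2 / (θ n) ^ 2 := rfl
  have hcθ : c * θ n ≠ 0 := haneg.ne
  have h1u_eq : 1 + u n = (c * θ n + x) / (c * θ n) := by
    rw [hu']; field_simp
  have h1upos : 0 < 1 + u n := by
    rw [h1u_eq]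
    exact div_pos_iff.2 (Or.inr ⟨hax, haneg⟩)
  have hrad_eq : 1 + 4 * v n / (1 + u n) ^ 2
      = 1 + 4 * c ^ 2 * (μ n) ^ 2 / (c * θ n + x) ^ 2 := by
    rw [h1u_eq, hv']
    field_simp
  have hA : ((c * θ n + x) / 2) ^ 2 * (1 + 4 * v n / (1 + u n) ^ 2)
      = ((c * θ n + x) / 2) ^ 2 + (n : ℝ) * (μ n) ^ 2 := by
    rw [hrad_eq, ← hc2]
    field_simp
    ring
  have hApos : 0 ≤ 1 + 4 * v n / (1 + u n) ^ 2 := by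
    rw [hrad_eq]; positivity
  have hA1 : 1 ≤ 1 + 4 * v n / (1 + u n) ^ 2 := by
    rw [hrad_eq]
    have : 0 ≤ 4 * c ^ 2 * (μ n) ^ 2 / (c * θ n + x) ^ 2 := by positivity
    linarith
  have hsqrt : Real.sqrt (((c * θ n + x) / 2) ^ 2 + (n : ℝ) * (μ n) ^ 2)
      = (-((c * θ n + x) / 2)) * Real.sqrt (1 + 4 * v n / (1 + u n) ^ 2) := by
    rw [← hA, show ((c * θ n + x) / 2) ^ 2 = (-((c * θ n + x) / 2)) ^ 2 by ring,
      Real.sqrt_mul (sq_nonneg _), Real.sqrt_sq (by linarith)]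
  set S := Real.sqrt (1 + 4 * v n / (1 + u n) ^ 2) with hS_def
  have hS2 : S ^ 2 = 1 + 4 * v n / (1 + u n) ^ 2 := Real.sq_sqrt hApos
  have hS1 : 1 ≤ S := Real.one_le_sqrt.2 hA1
  have hSne : S + 1 ≠ 0 := by linarith
  have key : (c * θ n + x) ^ 2 * (S ^ 2 - 1) = 4 * c ^ 2 * (μ n) ^ 2 := by
    rw [hS2, hrad_eq]
    field_simp
    ring
  show (2 / (1 + u n)) / (S + 1)
      = ((-(c * θ n - x) / 2 - Real.sqrt (((c * θ n + x) / 2) ^ 2 + (n:ℝ) * (μ n) ^ 2)) - x)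
        / (c * (μ n) ^ 2 / θ n)
  rw [hsqrt, h1u_eq]
  field_simp
  ring_nf
  linear_combination (-1 : ℝ) * key
end

section
/- Let (μₙ) be positive reals with μₙ → 0 and √n·μₙ → m, 0 ≤ m < ∞, and let (θₙ) be real with √n·θₙ → ν ∈ ℝ. Let F_n(x) = 1(√n·θₙ + x ≥ 0)Φ(z⁽²⁾ₙ(x)) + 1(√n·θₙ + x < 0)Φ(z⁽¹⁾ₙ(x)) with z^{(1,2)}ₙ(x) = -(√n·θₙ - x)/2 ∓ √(((√n·θₙ + x)/2)² + nμₙ²). Then for every x ≠ -ν, F_n(x) → 1(x+ν ≥ 0)Φ(-(ν-x)/2 + √(((ν+x)/2)² + m²)) + 1(x+ν < 0)Φ(-(ν-x)/2 - √(((ν+x)/2)² + m²)). -/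
open ProbabilityTheory Filter

/-- The finite-sample cdf of `√n(θ̂_A - θ)` in the Gaussian location model:
`F(x) = 1(√n θ + x ≥ 0) Φ(z⁽²⁾(x)) + 1(√n θ + x < 0) Φ(z⁽¹⁾(x))`. -/
noncomputable def Fcdf (n : ℕ) (θ μ x : ℝ) : ℝ :=
  if 0 ≤ Real.sqrt n * θ + x then
    Phi (-(Real.sqrt n * θ - x) / 2
      + Real.sqrt (((Real.sqrt n * θ + x) / 2) ^ 2 + n * μ ^ 2))
  else
    Phi (-(Real.sqrt n * θ - x) / 2
      - Real.sqrt (((Real.sqrt n * θ + x) / 2) ^ 2 + n * μ ^ 2))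

lemma Phi_eq_integral (y : ℝ) :
    Phi y = ∫ t in Set.Iic y, gaussianPDFReal 0 1 t := by
  rw [Phi, cdf_eq_real, MeasureTheory.measureReal_def, gaussianReal_apply_eq_integral 0 (by norm_num) _,
    ENNReal.toReal_ofReal]
  exact MeasureTheory.setIntegral_nonneg measurableSet_Iic
    (fun t _ => gaussianPDFReal_nonneg _ _ _)

lemma continuous_Phi : Continuous Phi := by
  have hint : MeasureTheory.Integrable (gaussianPDFReal 0 1) :=
    integrable_gaussianPDFReal 0 1
  have h : ∀ y, Phi y = (∫ t in (0:ℝ)..y, gaussianPDFReal 0 1 t) + Phi 0 := by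
    intro y
    rw [Phi_eq_integral, Phi_eq_integral,
      ← intervalIntegral.integral_Iic_sub_Iic hint.integrableOn hint.integrableOn]
    ring
  rw [show Phi = fun y => (∫ t in (0:ℝ)..y, gaussianPDFReal 0 1 t) + Phi 0
    from funext h]
  exact (hint.continuous_primitive 0).add continuous_const

/-- conservative case. If `μₙ → 0`, `√n μₙ → m ∈ [0,∞)`, and
`√n θₙ → ν ∈ ℝ`, then for every `x ≠ -ν`, `Fₙ(x)` tends to
`1(x+ν ≥ 0) Φ(-(ν-x)/2 + √(((ν+x)/2)² + m²)) + 1(x+ν < 0) Φ(-(ν-x)/2 - √(((ν+x)/2)² + m²))`. -/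
theorem stmt13 (μ θ : ℕ → ℝ) (m ν : ℝ) (hm : 0 ≤ m) (hμpos : ∀ n, 0 < μ n)
    (hμ0 : Tendsto μ atTop (nhds 0))
    (hμm : Tendsto (fun n : ℕ => Real.sqrt n * μ n) atTop (nhds m))
    (hθν : Tendsto (fun n : ℕ => Real.sqrt n * θ n) atTop (nhds ν)) :
    ∀ x : ℝ, x ≠ -ν →
      Tendsto (fun n : ℕ => Fcdf n (θ n) (μ n) x) atTop
        (nhds
          (if 0 ≤ x + ν then
            Phi (-(ν - x) / 2 + Real.sqrt (((ν + x) / 2) ^ 2 + m ^ 2))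
          else
            Phi (-(ν - x) / 2 - Real.sqrt (((ν + x) / 2) ^ 2 + m ^ 2)))) := by
  intro x hx
  have hnμ : ∀ n : ℕ, (n : ℝ) * μ n ^ 2 = (Real.sqrt n * μ n) ^ 2 := by
    intro n
    rw [mul_pow, Real.sq_sqrt (Nat.cast_nonneg n)]
  have hsum : Tendsto (fun n : ℕ => Real.sqrt n * θ n + x) atTop (nhds (ν + x)) := by
    simpa using hθν.add_const x
  have hsqrt : Tendsto
      (fun n : ℕ => Real.sqrt (((Real.sqrt n * θ n + x) / 2) ^ 2
        + (n : ℝ) * μ n ^ 2)) atTop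
      (nhds (Real.sqrt (((ν + x) / 2) ^ 2 + m ^ 2))) := by
    apply (Real.continuous_sqrt.tendsto _).comp
    simp only [hnμ]
    exact ((hsum.div_const 2).pow 2).add (hμm.pow 2)
  have hlin : Tendsto (fun n : ℕ => -(Real.sqrt n * θ n - x) / 2) atTop
      (nhds (-(ν - x) / 2)) := ((hθν.sub_const x).neg).div_const 2
  rcases lt_or_gt_of_ne (fun h : x + ν = 0 => hx (by linarith)) with hneg | hpos
  · -- x + ν < 0
    rw [if_neg (not_le.mpr hneg)]
    have hev : ∀ᶠ n : ℕ in atTop, Real.sqrt n * θ n + x < 0 := by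
      have : ν + x < 0 := by linarith
      exact hsum (Iio_mem_nhds this)
    have hmain : Tendsto
        (fun n : ℕ => Phi (-(Real.sqrt n * θ n - x) / 2
          - Real.sqrt (((Real.sqrt n * θ n + x) / 2) ^ 2 + (n : ℝ) * μ n ^ 2)))
        atTop (nhds (Phi (-(ν - x) / 2 - Real.sqrt (((ν + x) / 2) ^ 2 + m ^ 2)))) :=
      (continuous_Phi.tendsto _).comp (hlin.sub hsqrt)
    refine hmain.congr' ?_
    filter_upwards [hev] with n hn
    rw [Fcdf, if_neg (not_le.mpr hn)]
  · -- 0 < x + ν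
    rw [if_pos (le_of_lt hpos)]
    have hev : ∀ᶠ n : ℕ in atTop, 0 < Real.sqrt n * θ n + x := by
      have : 0 < ν + x := by linarith
      exact hsum (Ioi_mem_nhds this)
    have hmain : Tendsto
        (fun n : ℕ => Phi (-(Real.sqrt n * θ n - x) / 2
          + Real.sqrt (((Real.sqrt n * θ n + x) / 2) ^ 2 + (n : ℝ) * μ n ^ 2)))
        atTop (nhds (Phi (-(ν - x) / 2 + Real.sqrt (((ν + x) / 2) ^ 2 + m ^ 2)))) :=
      (continuous_Phi.tendsto _).comp (hlin.add hsqrt)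
    refine hmain.congr' ?_
    filter_upwards [hev] with n hn
    rw [Fcdf, if_pos (le_of_lt hn)]
end

section
/- Let (μₙ) be positive with μₙ → 0, √n·μₙ → ∞, and (θₙ) with θₙ/μₙ → ζ where |ζ| < 1. Then the cdf G_n of μₙ⁻¹(θ̂_A - θₙ) satisfies G_n(x) → 1(x ≥ -ζ) for every x ≠ -ζ. -/
open ProbabilityTheory Filter
open MeasureTheory ENNReal

/-- The finite-sample cdf of `μ⁻¹(θ̂_A - θ)` under `ȳ ~ N(θ, 1/n)`. -/
noncomputable def Gcdf (n : ℕ) (θ μ x : ℝ) : ℝ :=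
  (gaussianReal θ ((n : NNReal))⁻¹
    {y : ℝ | μ⁻¹ * (alasso μ y - θ) ≤ x}).toReal

lemma alasso_meas (μ : ℝ) : Measurable (alasso μ) := by
  unfold alasso
  exact measurable_id.mul ((measurable_const.sub
    (((measurable_id.pow_const 2).inv).const_mul (μ ^ 2))).max measurable_const)

lemma alasso_eq_zero {μ y : ℝ} (hy : |y| ≤ μ) : alasso μ y = 0 := by
  rcases eq_or_ne y 0 with h | h
  · simp [alasso, h]
  · have hy2 : 0 < y ^ 2 := by positivity
    have h1 : y ^ 2 ≤ μ ^ 2 := by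
      have := sq_abs y
      nlinarith [abs_nonneg y]
    have : (1 : ℝ) ≤ μ ^ 2 / y ^ 2 := (one_le_div hy2).2 h1
    have : (1 : ℝ) - μ ^ 2 / y ^ 2 ≤ 0 := by linarith
    simp [alasso, max_eq_right this]

lemma Gcdf_eq (n : ℕ) (hn : n ≠ 0) (θ μ x : ℝ) :
    Gcdf n θ μ x = ((gaussianReal 0 1)
      {z : ℝ | μ⁻¹ * (alasso μ ((Real.sqrt n)⁻¹ * z + θ) - θ) ≤ x}).toReal := by
  set c : ℝ := (Real.sqrt n)⁻¹ with hc
  have hvar : (⟨c ^ 2, sq_nonneg _⟩ * 1 : NNReal) = ((n : NNReal))⁻¹ := by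
    ext
    push_cast
    rw [show ((⟨c ^ 2, sq_nonneg _⟩ * 1 : NNReal) : ℝ) = c ^ 2 from mul_one _]
    rw [hc, inv_pow, Real.sq_sqrt (Nat.cast_nonneg n)]
  have hmap : (gaussianReal 0 1).map (fun z => c * z + θ)
      = gaussianReal θ ((n : NNReal))⁻¹ := by
    have h1 : (gaussianReal 0 1).map (c * ·) = gaussianReal 0 ((n : NNReal))⁻¹ := by
      rw [gaussianReal_map_const_mul c, mul_zero]; congr 1
    have h2 : ((gaussianReal 0 1).map (c * ·)).map (· + θ)
        = gaussianReal θ ((n : NNReal))⁻¹ := by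
      rw [h1, gaussianReal_map_add_const, zero_add]
    have h3 := Measure.map_map (μ := gaussianReal 0 1) (f := fun z : ℝ => c * z)
      (g := fun z : ℝ => z + θ) (by fun_prop) (by fun_prop)
    simp only [Function.comp_def] at h3
    rw [← h2, ← h3]
  have hS : MeasurableSet {y : ℝ | μ⁻¹ * (alasso μ y - θ) ≤ x} :=
    measurableSet_le ((((alasso_meas μ).sub_const θ).const_mul μ⁻¹)) measurable_const
  have happ := Measure.map_apply (μ := gaussianReal 0 1) (f := fun z : ℝ => c * z + θ)
    (by fun_prop) hS
  rw [Gcdf, ← hmap, happ]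
  rfl

lemma tail_toReal (R : ℕ → ℝ) (hR : Tendsto R atTop atTop) :
    Tendsto (fun n => ((gaussianReal 0 1) {z : ℝ | R n < |z|}).toReal) atTop (nhds 0) := by
  set γ := gaussianReal 0 1
  have key : Tendsto (fun n => γ {z : ℝ | R n < |z|}) atTop (nhds 0) := by
    rw [ENNReal.tendsto_nhds_zero]
    intro ε hε
    have hA : Tendsto (fun k : ℕ => γ {z : ℝ | (k : ℝ) < |z|}) atTop (nhds 0) := by
      have h0 : (⋂ k : ℕ, {z : ℝ | (k : ℝ) < |z|}) = ∅ := by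
        ext z
        simp only [Set.mem_iInter, Set.mem_setOf_eq, Set.mem_empty_iff_false, iff_false,
          not_forall, not_lt]
        obtain ⟨k, hk⟩ := exists_nat_ge |z|
        exact ⟨k, hk⟩
      have := tendsto_measure_iInter_atTop (μ := γ)
        (s := fun k : ℕ => {z : ℝ | (k : ℝ) < |z|})
        (fun k => (measurableSet_lt measurable_const _root_.measurable_abs).nullMeasurableSet)
        (fun i j hij => fun z hz => by simp only [Set.mem_setOf_eq] at hz ⊢; exact lt_of_le_of_lt (Nat.cast_le.mpr hij) hz)
        ⟨0, measure_ne_top γ _⟩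
      rwa [h0, measure_empty] at this
    obtain ⟨k, hk⟩ := (ENNReal.tendsto_nhds_zero.1 hA ε hε).exists
    filter_upwards [hR.eventually_ge_atTop (k : ℝ)] with n hn
    exact le_trans (measure_mono fun z hz => lt_of_le_of_lt hn hz) hk
  have := (ENNReal.tendsto_toReal (a := 0) (by simp)).comp key
  exact this

/-- consistent case with `θₙ/μₙ → ζ`, `|ζ| < 1`: the cdf `Gₙ` of
`μₙ⁻¹(θ̂_A - θₙ)` satisfies `Gₙ(x) → 1(x ≥ -ζ)` for every `x ≠ -ζ`. -/
theorem stmt18 (μ θ : ℕ → ℝ) (ζ : ℝ) (hζ : |ζ| < 1) (hμpos : ∀ n, 0 < μ n)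
    (hμ0 : Tendsto μ atTop (nhds 0))
    (hμinf : Tendsto (fun n : ℕ => Real.sqrt n * μ n) atTop atTop)
    (hθζ : Tendsto (fun n : ℕ => θ n / μ n) atTop (nhds ζ)) :
    ∀ x : ℝ, x ≠ -ζ →
      Tendsto (fun n : ℕ => Gcdf n (θ n) (μ n) x) atTop
        (nhds (if -ζ ≤ x then 1 else 0)) := by
  intro x hx
  set γ := gaussianReal 0 1 with hγ
  set a : ℝ := (1 + |ζ|) / 2 with ha
  have haζ : |ζ| < a := by rw [ha]; linarith
  have ha1 : a < 1 := by rw [ha]; linarith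
  set R : ℕ → ℝ := fun n => Real.sqrt n * (μ n - |θ n|) with hRdef
  -- eventual ratio bound
  have hev : ∀ᶠ n in atTop, |θ n| ≤ a * μ n := by
    filter_upwards [(hθζ.abs.eventually_lt_const haζ :)] with n hn
    have := (hμpos n)
    rw [abs_div, abs_of_pos this, div_lt_iff₀ this] at hn
    linarith
  have hRtop : Tendsto R atTop atTop := by
    apply tendsto_atTop_mono' _ _ ((hμinf.const_mul_atTop (by linarith : (0:ℝ) < 1 - a)))
    filter_upwards [hev] with n hn
    have hs : (0:ℝ) ≤ Real.sqrt n := Real.sqrt_nonneg n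
    have hRn : R n = Real.sqrt n * (μ n - |θ n|) := rfl
    rw [hRn]
    nlinarith [mul_nonneg hs (sub_nonneg.2 hn)]
  -- key pointwise identity
  have hkey : ∀ᶠ n in atTop, ∀ z : ℝ, |z| ≤ R n →
      (μ n)⁻¹ * (alasso (μ n) ((Real.sqrt n)⁻¹ * z + θ n) - θ n) = -(θ n / μ n) := by
    filter_upwards [eventually_ge_atTop 1] with n hn z hz
    have hs : (0:ℝ) < Real.sqrt n := Real.sqrt_pos.2 (by exact_mod_cast hn)
    have hy : |(Real.sqrt n)⁻¹ * z + θ n| ≤ μ n := by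
      calc |(Real.sqrt n)⁻¹ * z + θ n| ≤ |(Real.sqrt n)⁻¹ * z| + |θ n| := abs_add_le _ _
        _ ≤ (Real.sqrt n)⁻¹ * R n + |θ n| := by
            rw [abs_mul, abs_of_pos (inv_pos.2 hs)]
            nlinarith [inv_pos.2 hs]
        _ = μ n := by rw [hRdef]; field_simp; ring
    rw [alasso_eq_zero hy]
    field_simp
    ring
  have hGeq : ∀ᶠ n in atTop, Gcdf n (θ n) (μ n) x
      = (γ {z : ℝ | (μ n)⁻¹ * (alasso (μ n) ((Real.sqrt n)⁻¹ * z + θ n) - θ n) ≤ x}).toReal := by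
    filter_upwards [eventually_ge_atTop 1] with n hn
    exact Gcdf_eq n (by omega) _ _ _
  have htail := tail_toReal R hRtop
  rcases lt_or_gt_of_ne hx with hlt | hgt
  · -- x < -ζ : target 0
    rw [if_neg (by linarith)]
    have hxev : ∀ᶠ n in atTop, x < -(θ n / μ n) := by
      have : Tendsto (fun n => -(θ n / μ n)) atTop (nhds (-ζ)) := hθζ.neg
      exact this.eventually_const_lt hlt
    apply tendsto_of_tendsto_of_tendsto_of_le_of_le' tendsto_const_nhds htail
    · filter_upwards [hGeq] with n hn
      rw [hn]; positivity
    · filter_upwards [hGeq, hkey, hxev] with n hn hk hxn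
      rw [hn]
      apply ENNReal.toReal_mono (measure_ne_top _ _)
      apply measure_mono
      intro z hz
      simp only [Set.mem_setOf_eq] at hz ⊢
      by_contra hR
      push_neg at hR
      rw [hk z hR] at hz
      linarith
  · -- -ζ < x : target 1
    rw [if_pos (by linarith)]
    have hxev : ∀ᶠ n in atTop, -(θ n / μ n) ≤ x := by
      have : Tendsto (fun n => -(θ n / μ n)) atTop (nhds (-ζ)) := hθζ.neg
      exact (this.eventually_lt_const hgt).mono fun n h => le_of_lt h
    have hlow : ∀ᶠ n in atTop, 1 - (γ {z : ℝ | R n < |z|}).toReal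
        ≤ Gcdf n (θ n) (μ n) x := by
      filter_upwards [hGeq, hkey, hxev] with n hn hk hxn
      rw [hn]
      set S := {z : ℝ | (μ n)⁻¹ * (alasso (μ n) ((Real.sqrt n)⁻¹ * z + θ n) - θ n) ≤ x}
      have hsub : Set.univ ⊆ S ∪ {z : ℝ | R n < |z|} := by
        intro z _
        by_cases h : |z| ≤ R n
        · left; simp only [S, Set.mem_setOf_eq]; rw [hk z h]; exact hxn
        · right; simpa using lt_of_not_ge h
      have h1 : (1 : ℝ≥0∞) ≤ γ S + γ {z : ℝ | R n < |z|} := by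
        calc (1:ℝ≥0∞) = γ Set.univ := (measure_univ).symm
          _ ≤ γ (S ∪ {z : ℝ | R n < |z|}) := measure_mono hsub
          _ ≤ _ := measure_union_le _ _
      have := ENNReal.toReal_mono
        (by exact ENNReal.add_ne_top.2 ⟨measure_ne_top _ _, measure_ne_top _ _⟩) h1
      rw [ENNReal.toReal_add (measure_ne_top _ _) (measure_ne_top _ _)] at this
      simp only [ENNReal.toReal_one] at this
      linarith
    apply tendsto_of_tendsto_of_tendsto_of_le_of_le' _ tendsto_const_nhds hlow
    · filter_upwards with n
      exact ENNReal.toReal_le_of_le_ofReal zero_le_one (by simpa using prob_le_one)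
    · have : Tendsto (fun n : ℕ => 1 - ((gaussianReal 0 1) {z : ℝ | R n < |z|}).toReal)
          atTop (nhds (1 - 0)) := (tendsto_const_nhds).sub htail
      simpa using this
end

section
/- Fix n ≥ 1, μ > 0, t ∈ ℝ, and let F_{A,n,θ}(t) denote the value at t of the finite-sample cdf of √n(θ̂_A - θ) in the Gaussian location model. Setting θₙ(δ) = -(t+δ)/√n, we have lim_{δ↓0} |F_{A,n,θₙ(-δ)}(t) - F_{A,n,θₙ(δ)}(t)| = Φ(t + √n·μ) - Φ(t - √n·μ). -/
open ProbabilityTheory Filter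

/-- with `θₙ(δ) = -(t+δ)/√n`,
`lim_{δ↓0} |F_{A,n,θₙ(-δ)}(t) - F_{A,n,θₙ(δ)}(t)| = Φ(t + √n μ) - Φ(t - √n μ)`. -/
theorem stmt19 (n : ℕ) (hn : 1 ≤ n) (μ t : ℝ) (hμ : 0 < μ) :
    Tendsto
      (fun δ : ℝ =>
        |Fcdf n (-(t + -δ) / Real.sqrt n) μ t - Fcdf n (-(t + δ) / Real.sqrt n) μ t|)
      (nhdsWithin 0 (Set.Ioi 0))
      (nhds (Phi (t + Real.sqrt n * μ) - Phi (t - Real.sqrt n * μ))) := by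
  have hn0 : (0:ℝ) < n := by exact_mod_cast hn
  have hs : (0:ℝ) < Real.sqrt n := Real.sqrt_pos.2 hn0
  set c : ℝ := (n:ℝ) * μ ^ 2 with hc
  have hsc : Real.sqrt c = Real.sqrt n * μ := by
    rw [hc, Real.sqrt_mul (le_of_lt hn0), Real.sqrt_sq hμ.le]
  set g : ℝ → ℝ := fun δ =>
    Phi (t - δ / 2 + Real.sqrt ((δ / 2) ^ 2 + c))
      - Phi (t + δ / 2 - Real.sqrt ((δ / 2) ^ 2 + c)) with hg
  have hcont : Continuous g := by
    apply Continuous.sub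
    · exact continuous_Phi.comp (by continuity)
    · exact continuous_Phi.comp (by continuity)
  have hg0 : g 0 = Phi (t + Real.sqrt n * μ) - Phi (t - Real.sqrt n * μ) := by
    simp [hg, hsc]
  have htends : Tendsto (fun δ => |g δ|) (nhdsWithin 0 (Set.Ioi 0))
      (nhds (Phi (t + Real.sqrt n * μ) - Phi (t - Real.sqrt n * μ))) := by
    have h1 : Tendsto g (nhdsWithin 0 (Set.Ioi 0)) (nhds (g 0)) :=
      (hcont.tendsto 0).mono_left nhdsWithin_le_nhds
    have h2 := h1.abs
    rw [hg0, abs_of_nonneg] at h2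
    · exact h2
    · apply sub_nonneg.2
      exact monotone_cdf _ (by nlinarith [hs, hμ])
  refine htends.congr' ?_
  filter_upwards [self_mem_nhdsWithin] with δ (hδ : 0 < δ)
  have key : ∀ s : ℝ, Real.sqrt n * (-(t + s) / Real.sqrt n) = -(t + s) := by
    intro s; field_simp
  have e1 : Fcdf n (-(t + -δ) / Real.sqrt n) μ t
      = Phi (t - δ / 2 + Real.sqrt ((δ / 2) ^ 2 + c)) := by
    rw [Fcdf, if_pos]
    · rw [key, hc]; ring_nf
    · rw [key]; linarith
  have e2 : Fcdf n (-(t + δ) / Real.sqrt n) μ t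
      = Phi (t + δ / 2 - Real.sqrt ((δ / 2) ^ 2 + c)) := by
    rw [Fcdf, if_neg]
    · rw [key, hc]; ring_nf
    · rw [key]; linarith
  rw [hg, e1, e2]
end
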